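/- Let ε, δ ∈ (0,1) and let n be any positive integer such that g(n, n(1+ε)/(1+2ε)) − g(n, n(1+ε)) ≥ 1 − δ, where g(m, x) = e^{−x} ∑_{i=0}^{m−1} xⁱ/i!. Let X₁, …, Xₙ be i.i.d. exponential random variables with mean μ > 0, and define μ̂ = (∑_{i=1}^n Xᵢ)/n. Then Pr{ |μ̂ − μ| / μ < ε } ≥ 1 − δ. -/

import Mathlib

/-! The sample sum `S = X₁ + ⋯ + Xₙ` has the Erlang law `Γ(n, 1/μ)`: convolving `Γ(k, r)`
with `Exp(r)` gives `Γ(k + 1, r)`, as one sees by comparing distribution functions, that of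
`Γ(k, r)` being `t ↦ 1 - g(k, r t)` on `[0, ∞)`. Hence
`Pr{|μ̂ - μ| < εμ} = Pr{nμ(1 - ε) < S < nμ(1 + ε)} = g(n, n(1 - ε)) - g(n, n(1 + ε))`,
and since `g(n, ·)` decreases on `[0, ∞)` (its derivative is `-xⁿ⁻¹e⁻ˣ/(n-1)!`) and
`(1 - ε)(1 + 2ε) ≤ 1 + ε`, this is at least
`g(n, n(1 + ε)/(1 + 2ε)) - g(n, n(1 + ε)) ≥ 1 - δ`. -/

open MeasureTheory ProbabilityTheory

/-- `g m x = e^{-x} ∑_{i=0}^{m-1} x^i / i!`. -/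
noncomputable def g (m : ℕ) (x : ℝ) : ℝ :=
  Real.exp (-x) * ∑ i ∈ Finset.range m, x ^ i / (Nat.factorial i)

open Real Set Nat

lemma g_succ (m : ℕ) (x : ℝ) : g (m + 1) x = g m x + exp (-x) * x ^ m / m ! := by
  rw [g, g, Finset.sum_range_succ]
  ring

lemma g_succ_zero (k : ℕ) : g (k + 1) 0 = 1 := by
  simp [g, Finset.sum_range_succ']

lemma hasDerivAt_g_succ (k : ℕ) (x : ℝ) :
    HasDerivAt (g (k + 1)) (-(x ^ k * exp (-x) / k !)) x := by
  induction k with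
  | zero =>
    have : g 1 = fun y => exp (-y) := funext fun y => by simp [g]
    simpa [this] using (hasDerivAt_neg x).exp
  | succ k ih =>
    have hterm : HasDerivAt (fun y => exp (-y) * y ^ (k + 1) / (k + 1)!)
        ((-exp (-x) * x ^ (k + 1) + exp (-x) * ((k + 1 : ℕ) * x ^ k)) / (k + 1)!) x := by
      have := ((hasDerivAt_neg x).exp.mul (hasDerivAt_pow (k + 1) x)).div_const ((k + 1)! : ℝ)
      simpa using this
    rw [show g (k + 1 + 1) = fun y => g (k + 1) y + exp (-y) * y ^ (k + 1) / (k + 1)! from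
      funext (g_succ (k + 1))]
    refine (ih.add hterm).congr_deriv ?_
    rw [Nat.factorial_succ]
    push_cast
    field_simp
    ring

lemma antitoneOn_g_succ (k : ℕ) : AntitoneOn (g (k + 1)) (Ici 0) := by
  have hd : ∀ x, HasDerivAt (g (k + 1)) _ x := hasDerivAt_g_succ k
  refine antitoneOn_of_deriv_nonpos (convex_Ici 0)
    (fun x _ => (hd x).continuousAt.continuousWithinAt)
    (fun x _ => (hd x).differentiableAt.differentiableWithinAt) fun x hx => ?_
  rw [interior_Ici] at hx
  rw [(hd x).deriv, neg_nonpos]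
  have := hx.out.le
  positivity

-- `gammaPDFReal (k + 1) r` without the cut-off at `0`, hence continuous on all of `ℝ`.
noncomputable def erlangDensity (k : ℕ) (r x : ℝ) : ℝ :=
  r * ((r * x) ^ k * exp (-(r * x)) / k !)

lemma continuous_erlangDensity (k : ℕ) (r : ℝ) : Continuous (erlangDensity k r) := by
  unfold erlangDensity
  fun_prop

lemma erlangDensity_nonneg (k : ℕ) {r x : ℝ} (hr : 0 ≤ r) (hx : 0 ≤ x) :
    0 ≤ erlangDensity k r x := by
  unfold erlangDensity
  positivity

lemma integral_erlangDensity (k : ℕ) (r a b : ℝ) :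
    ∫ x in a..b, erlangDensity k r x = g (k + 1) (r * a) - g (k + 1) (r * b) := by
  have hderiv (x : ℝ) : HasDerivAt (fun y => -g (k + 1) (r * y)) (erlangDensity k r x) x := by
    refine ((hasDerivAt_g_succ k (r * x)).comp x ((hasDerivAt_id x).const_mul r)).neg
      |>.congr_deriv ?_
    simp only [erlangDensity, mul_one]
    ring
  rw [intervalIntegral.integral_eq_sub_of_hasDerivAt (fun x _ => hderiv x)
    ((continuous_erlangDensity k r).intervalIntegrable a b)]
  ring

lemma gammaPDFReal_natCast_add_one (k : ℕ) (r : ℝ) {x : ℝ} (hx : 0 ≤ x) :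
    gammaPDFReal (k + 1) r x = erlangDensity k r x := by
  rw [gammaPDFReal, if_pos hx, add_sub_cancel_right, Real.Gamma_nat_eq_factorial,
    ← Nat.cast_succ, Real.rpow_natCast, Real.rpow_natCast, erlangDensity, mul_pow, pow_succ]
  ring

lemma gammaMeasure_natCast_add_one_apply (k : ℕ) {r : ℝ} (hr : 0 ≤ r) {s : Set ℝ}
    (hs : MeasurableSet s) (hs₀ : s ⊆ Ici 0) (hint : IntegrableOn (erlangDensity k r) s) :
    gammaMeasure (k + 1) r s = ENNReal.ofReal (∫ x in s, erlangDensity k r x) := by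
  rw [gammaMeasure, withDensity_apply _ hs, ofReal_integral_eq_lintegral_ofReal hint
    ((ae_restrict_iff' hs).mpr (ae_of_all _ fun x hx => erlangDensity_nonneg k hr (hs₀ hx)))]
  refine setLIntegral_congr_fun hs fun x hx => ?_
  rw [gammaPDF, gammaPDFReal_natCast_add_one k r (hs₀ hx)]

lemma gammaMeasure_natCast_add_one_Ioo (k : ℕ) {r a b : ℝ} (hr : 0 ≤ r) (ha : 0 ≤ a)
    (hab : a ≤ b) :
    gammaMeasure (k + 1) r (Ioo a b)
      = ENNReal.ofReal (g (k + 1) (r * a) - g (k + 1) (r * b)) := by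
  rw [gammaMeasure_natCast_add_one_apply k hr measurableSet_Ioo
    (fun x hx => ha.trans hx.1.le)
    ((continuous_erlangDensity k r).integrableOn_Icc.mono_set Ioo_subset_Icc_self),
    ← integral_Ioc_eq_integral_Ioo, ← intervalIntegral.integral_of_le hab,
    integral_erlangDensity]

lemma gammaMeasure_Iio_zero (a r : ℝ) : gammaMeasure a r (Iio 0) = 0 := by
  rw [gammaMeasure, withDensity_apply _ measurableSet_Iio, lintegral_gammaPDF_of_nonpos le_rfl]

lemma gammaMeasure_Iic_of_neg (a r : ℝ) {t : ℝ} (ht : t < 0) : gammaMeasure a r (Iic t) = 0 :=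
  measure_mono_null (Iic_subset_Iio.mpr ht) (gammaMeasure_Iio_zero a r)

lemma gammaMeasure_natCast_add_one_Iic (k : ℕ) {r t : ℝ} (hr : 0 ≤ r) (ht : 0 ≤ t) :
    gammaMeasure (k + 1) r (Iic t) = ENNReal.ofReal (1 - g (k + 1) (r * t)) := by
  rw [← Iio_union_Icc_eq_Iic ht,
    measure_union ((Iio_disjoint_Ici le_rfl).mono_right Icc_subset_Ici_self) measurableSet_Icc,
    gammaMeasure_Iio_zero, zero_add, gammaMeasure_natCast_add_one_apply k hr measurableSet_Icc
      (fun x hx => hx.1) (continuous_erlangDensity k r).integrableOn_Icc,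
    integral_Icc_eq_integral_Ioc, ← intervalIntegral.integral_of_le ht, integral_erlangDensity,
    mul_zero, g_succ_zero]

lemma expMeasure_Iic {r s : ℝ} (hr : 0 < r) (hs : 0 ≤ s) :
    expMeasure r (Iic s) = ENNReal.ofReal (1 - exp (-(r * s))) := by
  have := isProbabilityMeasure_expMeasure hr
  rw [← ofReal_cdf, cdf_expMeasure_eq hr, if_pos hs]

lemma expMeasure_Iic_of_neg (r : ℝ) {s : ℝ} (hs : s < 0) : expMeasure r (Iic s) = 0 :=
  gammaMeasure_Iic_of_neg 1 r hs

lemma conv_apply_Iic (μ ν : Measure ℝ) [SFinite ν] (t : ℝ) :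
    (μ ∗ ν) (Iic t) = ∫⁻ x, ν (Iic (t - x)) ∂μ := by
  have hadd : Measurable fun p : ℝ × ℝ => p.1 + p.2 := by fun_prop
  rw [Measure.conv, Measure.map_apply hadd measurableSet_Iic,
    Measure.prod_apply (hadd measurableSet_Iic)]
  congr! with x
  ext y
  simp [le_sub_iff_add_le']

lemma integral_erlangDensity_mul_one_sub_exp (k : ℕ) (r t : ℝ) :
    ∫ x in 0..t, erlangDensity k r x * (1 - exp (-(r * (t - x))))
      = 1 - g (k + 1 + 1) (r * t) := by
  have hsplit (x : ℝ) : erlangDensity k r x * (1 - exp (-(r * (t - x))))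
      = erlangDensity k r x - exp (-(r * t)) * r ^ (k + 1) / k ! * x ^ k := by
    have : exp (-(r * x)) * exp (-(r * (t - x))) = exp (-(r * t)) := by
      rw [← exp_add]; ring_nf
    rw [erlangDensity, ← this]
    ring
  simp_rw [hsplit]
  rw [intervalIntegral.integral_sub ((continuous_erlangDensity k r).intervalIntegrable 0 t)
    (((by fun_prop : Continuous fun x : ℝ => x ^ k).intervalIntegrable 0 t).const_mul _),
    intervalIntegral.integral_const_mul, integral_pow, integral_erlangDensity,
    mul_zero, g_succ_zero, g_succ (k + 1), Nat.factorial_succ]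
  push_cast
  field_simp
  ring

lemma gammaPDF_mul_expMeasure_Iic_sub (k : ℕ) {r : ℝ} (hr : 0 < r) (t : ℝ) :
    (gammaPDF (k + 1) r * fun x => expMeasure r (Iic (t - x))) = (Icc 0 t).indicator
      fun x => ENNReal.ofReal (erlangDensity k r x * (1 - exp (-(r * (t - x))))) := by
  funext x
  rcases lt_or_ge x 0 with hx | hx
  · simp [gammaPDF_of_neg hx, hx]
  rcases le_or_gt x t with hxt | hxt
  · rw [indicator_of_mem (show x ∈ Icc 0 t from ⟨hx, hxt⟩), Pi.mul_apply, gammaPDF,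
      gammaPDFReal_natCast_add_one k r hx, expMeasure_Iic hr (sub_nonneg.2 hxt),
      ← ENNReal.ofReal_mul (erlangDensity_nonneg k hr.le hx)]
  · rw [indicator_of_notMem (fun h => hxt.not_ge h.2), Pi.mul_apply,
      expMeasure_Iic_of_neg r (sub_neg.2 hxt), mul_zero]

lemma lintegral_expMeasure_Iic_sub_gammaMeasure (k : ℕ) {r t : ℝ} (hr : 0 < r) (ht : 0 ≤ t) :
    ∫⁻ x, expMeasure r (Iic (t - x)) ∂gammaMeasure (k + 1) r
      = ENNReal.ofReal (1 - g (k + 1 + 1) (r * t)) := by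
  have hcont : Continuous fun x => erlangDensity k r x * (1 - exp (-(r * (t - x)))) :=
    (continuous_erlangDensity k r).mul (by fun_prop)
  have hnonneg : 0 ≤ᵐ[volume.restrict (Icc 0 t)]
      fun x => erlangDensity k r x * (1 - exp (-(r * (t - x)))) := by
    refine (ae_restrict_iff' measurableSet_Icc).mpr (ae_of_all _ fun x hx => ?_)
    have : 0 ≤ r * (t - x) := mul_nonneg hr.le (sub_nonneg.2 hx.2)
    exact mul_nonneg (erlangDensity_nonneg k hr.le hx.1)
      (sub_nonneg.2 (exp_le_one_iff.2 (by linarith)))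
  rw [gammaMeasure, lintegral_withDensity_eq_lintegral_mul_non_measurable _
      (f := gammaPDF (k + 1) r) (measurable_gammaPDFReal _ _).ennreal_ofReal
      (ae_of_all _ fun _ => ENNReal.ofReal_lt_top),
    gammaPDF_mul_expMeasure_Iic_sub k hr, lintegral_indicator measurableSet_Icc,
    ← ofReal_integral_eq_lintegral_ofReal hcont.integrableOn_Icc hnonneg,
    integral_Icc_eq_integral_Ioc, ← intervalIntegral.integral_of_le ht,
    integral_erlangDensity_mul_one_sub_exp]

lemma gammaMeasure_natCast_add_one_conv_expMeasure (k : ℕ) {r : ℝ} (hr : 0 < r) :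
    gammaMeasure (k + 1) r ∗ expMeasure r = gammaMeasure (k + 1 + 1) r := by
  have := isProbabilityMeasure_expMeasure hr
  have : IsProbabilityMeasure (gammaMeasure (k + 1) r) :=
    isProbabilityMeasure_gammaMeasure (by positivity) hr
  have : IsProbabilityMeasure (gammaMeasure (k + 1 + 1) r) :=
    isProbabilityMeasure_gammaMeasure (by positivity) hr
  have : IsFiniteMeasure (gammaMeasure (k + 1) r ∗ expMeasure r) := by
    rw [Measure.conv]; infer_instance
  refine Measure.ext_of_Iic _ _ fun t => ?_
  rw [conv_apply_Iic]
  rcases lt_or_ge t 0 with ht | ht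
  · rw [gammaMeasure_Iic_of_neg _ _ ht, ← lintegral_zero]
    refine lintegral_congr_ae ?_
    filter_upwards [measure_eq_zero_iff_ae_notMem.mp (gammaMeasure_Iio_zero (k + 1) r)] with x hx
    exact expMeasure_Iic_of_neg r (by simp at hx; linarith)
  · have hIic := gammaMeasure_natCast_add_one_Iic (k + 1) hr.le ht
    push_cast at hIic
    rw [lintegral_expMeasure_Iic_sub_gammaMeasure k hr ht, hIic]

lemma hasLaw_sum_gammaMeasure {ι Ω : Type*} [MeasurableSpace Ω] {P : Measure Ω}
    {X : ι → Ω → ℝ} {r : ℝ} (hr : 0 < r) (hX : ∀ i, HasLaw (X i) (expMeasure r) P)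
    (hindep : iIndepFun X P) {s : Finset ι} (hs : s.Nonempty) :
    HasLaw (∑ i ∈ s, X i) (gammaMeasure s.card r) P := by
  induction hs using Finset.Nonempty.cons_induction with
  | singleton a => simpa [expMeasure] using hX a
  | cons a s ha hs ih =>
    obtain ⟨k, hk⟩ : ∃ k, s.card = k + 1 := ⟨s.card - 1, by have := hs.card_pos; omega⟩
    have : IsProbabilityMeasure (gammaMeasure (k + 1) r) :=
      isProbabilityMeasure_gammaMeasure (by positivity) hr
    have := isProbabilityMeasure_expMeasure hr
    rw [hk, Nat.cast_succ] at ih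
    rw [Finset.sum_cons, add_comm, Finset.card_cons, hk, Nat.cast_succ, Nat.cast_succ,
      ← gammaMeasure_natCast_add_one_conv_expMeasure k hr]
    exact (hindep.indepFun_finsetSum_of_notMem₀ (fun i => (hX i).aemeasurable) ha).hasLaw_add ih
      (hX a)

lemma g_succ_div_one_add_two_mul_le (k : ℕ) {c ε : ℝ} (hc : 0 ≤ c) (hε₀ : 0 ≤ ε)
    (hε₁ : ε ≤ 1) :
    g (k + 1) (c * (1 + ε) / (1 + 2 * ε)) ≤ g (k + 1) (c * (1 - ε)) := by
  have hlow : 0 ≤ c * (1 - ε) := mul_nonneg hc (by linarith)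
  have hmid : c * (1 - ε) ≤ c * (1 + ε) / (1 + 2 * ε) := by
    rw [le_div_iff₀ (by linarith)]
    nlinarith [mul_nonneg hc (sq_nonneg ε)]
  exact antitoneOn_g_succ k hlow (hlow.trans hmid) hmid

lemma setOf_abs_div_sub_div_lt_eq_Ioo {c m ε : ℝ} (hc : 0 < c) (hm : 0 < m) :
    {x : ℝ | |x / c - m| / m < ε} = Ioo (c * m * (1 - ε)) (c * m * (1 + ε)) := by
  ext x
  obtain ⟨y, rfl⟩ : ∃ y, x = c * y := ⟨x / c, by field_simp⟩
  change |c * y / c - m| / m < ε ↔ _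
  rw [mul_div_cancel_left₀ _ hc.ne',
    div_lt_iff₀ hm, abs_sub_lt_iff, mem_Ioo, mul_assoc, mul_assoc, mul_lt_mul_iff_right₀ hc,
    mul_lt_mul_iff_right₀ hc]
  constructor <;> rintro ⟨h₁, h₂⟩ <;> constructor <;> linarith

theorem service_time_sample_size_general
    {Ω : Type*} [MeasureSpace Ω] [IsProbabilityMeasure (ℙ : Measure Ω)]
    (ε δ : ℝ) (hε : ε ∈ Set.Ioo (0 : ℝ) 1)
    (n : ℕ) (hn : 0 < n)
    (hsize : g n ((n : ℝ) * (1 + ε) / (1 + 2 * ε)) - g n ((n : ℝ) * (1 + ε)) ≥ 1 - δ)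
    (μ : ℝ) (hμ : 0 < μ)
    (X : Fin n → Ω → ℝ) (hmeas : ∀ i, Measurable (X i))
    (hindep : iIndepFun X ℙ)
    (hdist : ∀ i, Measure.map (X i) ℙ = expMeasure (1 / μ)) :
    (ℙ {ω | |(∑ i, X i ω) / n - μ| / μ < ε}).toReal ≥ 1 - δ := by
  obtain ⟨k, rfl⟩ : ∃ k, n = k + 1 := ⟨n - 1, by omega⟩
  obtain ⟨hε₀, hε₁⟩ := hε
  have hr : 0 < 1 / μ := by positivity
  have hc : (0 : ℝ) < (k + 1 : ℕ) := by positivity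
  have hlaw : HasLaw (fun ω => ∑ i, X i ω) (gammaMeasure (k + 1) (1 / μ)) ℙ := by
    have := hasLaw_sum_gammaMeasure hr (fun i => ⟨(hmeas i).aemeasurable, hdist i⟩) hindep
      Finset.univ_nonempty
    rwa [Finset.card_univ, Fintype.card_fin, Nat.cast_succ, Finset.sum_fn] at this
  have hset := setOf_abs_div_sub_div_lt_eq_Ioo (ε := ε) hc hμ
  have hscale (a : ℝ) : 1 / μ * ((k + 1 : ℕ) * μ * a) = (k + 1 : ℕ) * a := by field_simp
  rw [hlaw.measure_eq (p := fun x => |x / _ - μ| / μ < ε) (hset ▸ measurableSet_Ioo), hset,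
    gammaMeasure_natCast_add_one_Ioo k hr.le (mul_nonneg (mul_pos hc hμ).le (by linarith))
      (mul_le_mul_of_nonneg_left (by linarith) (mul_pos hc hμ).le), hscale, hscale,
    ENNReal.toReal_ofReal']
  have := g_succ_div_one_add_two_mul_le k hc.le hε₀.le hε₁.le
  exact le_max_of_le_left (by linarith)

/-- If `ε, δ ∈ (0,1)`, `n ≥ 1` satisfies `g(n, n(1+ε)/(1+2ε)) - g(n, n(1+ε)) ≥ 1 - δ`, and
`X₁, …, Xₙ` are i.i.d. exponential with mean `μ > 0` with `μ̂ = (∑ Xᵢ)/n`, then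
`Pr{|μ̂ - μ|/μ < ε} ≥ 1 - δ`. -/
theorem service_time_sample_size
    {Ω : Type*} [MeasureSpace Ω] [IsProbabilityMeasure (ℙ : Measure Ω)]
    (ε δ : ℝ) (hε : ε ∈ Set.Ioo (0 : ℝ) 1) (hδ : δ ∈ Set.Ioo (0 : ℝ) 1)
    (n : ℕ) (hn : 0 < n)
    (hsize : g n ((n : ℝ) * (1 + ε) / (1 + 2 * ε)) - g n ((n : ℝ) * (1 + ε)) ≥ 1 - δ)
    (μ : ℝ) (hμ : 0 < μ)
    (X : Fin n → Ω → ℝ) (hmeas : ∀ i, Measurable (X i))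
    (hindep : iIndepFun X ℙ)
    (hdist : ∀ i, Measure.map (X i) ℙ = expMeasure (1 / μ)) :
    (ℙ {ω | |(∑ i, X i ω) / n - μ| / μ < ε}).toReal ≥ 1 - δ :=
  service_time_sample_size_general ε δ hε n hn hsize μ hμ X hmeas hindep hdist
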